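/- arXiv:1908.07158 — 3 statements merged into one kernel-verified Lean document; each statement's English description precedes it below -/
import Mathlib

section
/- For a smooth function f of n variables x₁,...,x_n and any k ∈ ℕ, the operator identity (−δ₁−⋯−δ_n)_k f = (−1)^k k! ∑_{i₁+⋯+i_n = k, iⱼ ≥ 0} (x₁^{i₁}/i₁!)⋯(x_n^{i_n}/i_n!) ∂^{i₁+⋯+i_n} f / (∂x₁^{i₁}⋯∂x_n^{i_n}) holds, where δⱼ = xⱼ ∂/∂xⱼ and (·)_k is the Pochhammer symbol applied to the operator −δ₁−⋯−δ_n. -/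
open scoped BigOperators

/-- Partial derivative in the i-th coordinate. -/
noncomputable def pderiv' {n : ℕ} (i : Fin n) (f : (Fin n → ℝ) → ℝ) :
    (Fin n → ℝ) → ℝ :=
  fun x => deriv (fun t => f (Function.update x i t)) (x i)

/-- Mixed partial derivative ∂^{i₁+⋯+i_n}/∂x₁^{i₁}⋯∂x_n^{i_n}. -/
noncomputable def mixedPderiv {n : ℕ} (idx : Fin n → ℕ)
    (f : (Fin n → ℝ) → ℝ) : (Fin n → ℝ) → ℝ :=
  (List.finRange n).foldr (fun i g => (pderiv' i)^[idx i] g) f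

/-- The operator −δ₁−⋯−δ_n where δⱼ = xⱼ ∂/∂xⱼ. -/
noncomputable def negEuler (n : ℕ) (f : (Fin n → ℝ) → ℝ) : (Fin n → ℝ) → ℝ :=
  fun x => -∑ i, x i * pderiv' i f x

/-- Pochhammer symbol (D)_k = D(D+1)⋯(D+k−1) of an operator D on functions,
with (D)_{k+1} = (D)_k ∘ (D + k). -/
noncomputable def opPoch {F : Type*} [AddCommMonoid F] [Module ℝ F]
    (D : F → F) : ℕ → F → F
  | 0 => id
  | k + 1 => fun f => opPoch D k (D f + (k : ℝ) • f)

namespace NEP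

variable {n : ℕ}

noncomputable def pd (i : Fin n) (f : (Fin n → ℝ) → ℝ) : (Fin n → ℝ) → ℝ :=
  fun x => fderiv ℝ f x (Pi.single i 1)

abbrev Sm (f : (Fin n → ℝ) → ℝ) : Prop := ContDiff ℝ ((⊤ : ℕ∞) : WithTop ℕ∞) f

lemma Sm.diff {f : (Fin n → ℝ) → ℝ} (hf : Sm f) : Differentiable ℝ f :=
  hf.differentiable (by simp)

lemma pd_smooth (i : Fin n) {f : (Fin n → ℝ) → ℝ} (hf : Sm f) : Sm (pd i f) := by
  have h1 : ContDiff ℝ ((⊤ : ℕ∞) : WithTop ℕ∞) (fderiv ℝ f) :=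
    hf.fderiv_right (by exact_mod_cast le_top)
  exact h1.clm_apply contDiff_const

lemma pderiv'_eq {f : (Fin n → ℝ) → ℝ} (hf : Differentiable ℝ f) (i : Fin n)
    (x : Fin n → ℝ) : pderiv' i f x = pd i f x := by
  have h1 : HasFDerivAt f (fderiv ℝ f x) (Function.update x i (x i)) := by
    rw [Function.update_eq_self]; exact (hf x).hasFDerivAt
  have hc : HasDerivAt (fun t => f (Function.update x i t))
      (fderiv ℝ f x (Pi.single i 1)) (x i) :=
    h1.comp_hasDerivAt (x i) (hasDerivAt_update x i (x i))
  exact hc.deriv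

lemma pd_add {f g : (Fin n → ℝ) → ℝ} {x : Fin n → ℝ} (hf : DifferentiableAt ℝ f x)
    (hg : DifferentiableAt ℝ g x) (i : Fin n) :
    pd i (fun y => f y + g y) x = pd i f x + pd i g x := by
  simp only [pd, fderiv_fun_add hf hg, ContinuousLinearMap.add_apply]

lemma pd_const_mul {f : (Fin n → ℝ) → ℝ} {x : Fin n → ℝ} (hf : DifferentiableAt ℝ f x)
    (c : ℝ) (i : Fin n) :
    pd i (fun y => c * f y) x = c * pd i f x := by
  simp only [pd, fderiv_const_mul hf c, ContinuousLinearMap.smul_apply, smul_eq_mul]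

lemma pd_zero (i : Fin n) : pd i (fun _ : Fin n → ℝ => (0:ℝ)) = fun _ => 0 := by
  funext x
  simp [pd, fderiv_const]

lemma pd_coord_mul {f : (Fin n → ℝ) → ℝ} {x : Fin n → ℝ} (hf : DifferentiableAt ℝ f x)
    (i j : Fin n) :
    pd i (fun y => y j * f y) x = (if j = i then f x else 0) + x j * pd i f x := by
  have hco : DifferentiableAt ℝ (fun y : Fin n → ℝ => y j) x :=
    (ContinuousLinearMap.proj (R := ℝ) (φ := fun _ : Fin n => ℝ) j).differentiableAt
  have hcf : fderiv ℝ (fun y : Fin n → ℝ => y j) x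
      = ContinuousLinearMap.proj (R := ℝ) (φ := fun _ : Fin n => ℝ) j :=
    (ContinuousLinearMap.proj (R := ℝ) (φ := fun _ : Fin n => ℝ) j).fderiv
  have := fderiv_fun_mul hco hf
  simp only [pd, this, hcf, ContinuousLinearMap.add_apply, ContinuousLinearMap.smul_apply,
    smul_eq_mul, ContinuousLinearMap.proj_apply, Pi.single_apply]
  ring_nf
  rw [mul_comm]
  ring_nf
  congr 1
  · split_ifs <;> simp

lemma two_le_inf : (2 : WithTop ℕ∞) ≤ ((⊤:ℕ∞) : WithTop ℕ∞) := by
  rw [show (2 : WithTop ℕ∞) = ((2:ℕ∞) : WithTop ℕ∞) by rfl]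
  exact WithTop.coe_le_coe.mpr le_top

lemma pd_comm {f : (Fin n → ℝ) → ℝ} (hf : Sm f) (i j : Fin n) :
    pd i (pd j f) = pd j (pd i f) := by
  have hdf' : ContDiff ℝ ((⊤ : ℕ∞) : WithTop ℕ∞) (fderiv ℝ f) :=
    hf.fderiv_right (by exact_mod_cast le_top)
  have hdf : Differentiable ℝ (fderiv ℝ f) := hdf'.differentiable (by simp)
  have key : ∀ (a : Fin n) (v : Fin n → ℝ) (x : Fin n → ℝ),
      pd a (fun y => fderiv ℝ f y v) x = fderiv ℝ (fderiv ℝ f) x (Pi.single a 1) v := by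
    intro a v x
    have h := fderiv_clm_apply (hdf x) (differentiableAt_const v)
    simp only [pd, h, ContinuousLinearMap.add_apply, ContinuousLinearMap.comp_apply,
      fderiv_const, fderiv_const_apply, Pi.zero_apply, ContinuousLinearMap.zero_apply, map_zero,
      ContinuousLinearMap.flip_apply, zero_add]
  funext x
  have hsym : IsSymmSndFDerivAt ℝ f x :=
    (hf.contDiffAt).isSymmSndFDerivAt (by rw [minSmoothness_of_isRCLikeNormedField]; exact two_le_inf)
  have h1 : pd i (pd j f) x = fderiv ℝ (fderiv ℝ f) x (Pi.single i 1) (Pi.single j 1) :=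
    key i (Pi.single j 1) x
  have h2 : pd j (pd i f) x = fderiv ℝ (fderiv ℝ f) x (Pi.single j 1) (Pi.single i 1) :=
    key j (Pi.single i 1) x
  rw [h1, h2, hsym.eq]

lemma coord_smooth (j : Fin n) : Sm (fun y : Fin n → ℝ => y j) :=
  (ContinuousLinearMap.proj (R := ℝ) (φ := fun _ : Fin n => ℝ) j).contDiff

lemma coord_mul_smooth (j : Fin n) {f : (Fin n → ℝ) → ℝ} (hf : Sm f) :
    Sm (fun y => y j * f y) := (coord_smooth j).mul hf

lemma iter_smooth (i : Fin n) (m : ℕ) {f : (Fin n → ℝ) → ℝ} (hf : Sm f) :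
    Sm ((pd i)^[m] f) := by
  induction m with
  | zero => simpa
  | succ m ih => rw [Function.iterate_succ_apply']; exact pd_smooth i ih

lemma iter_add (i : Fin n) (m : ℕ) {f g : (Fin n → ℝ) → ℝ} (hf : Sm f) (hg : Sm g) :
    (pd i)^[m] (fun y => f y + g y) = fun y => (pd i)^[m] f y + (pd i)^[m] g y := by
  induction m with
  | zero => simp
  | succ m ih =>
    rw [Function.iterate_succ_apply', Function.iterate_succ_apply',
      Function.iterate_succ_apply', ih]
    funext x
    exact pd_add ((iter_smooth i m hf).diff x) ((iter_smooth i m hg).diff x) i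

lemma iter_const_mul (i : Fin n) (m : ℕ) {f : (Fin n → ℝ) → ℝ} (hf : Sm f) (c : ℝ) :
    (pd i)^[m] (fun y => c * f y) = fun y => c * (pd i)^[m] f y := by
  induction m with
  | zero => simp
  | succ m ih =>
    rw [Function.iterate_succ_apply', Function.iterate_succ_apply', ih]
    funext x
    exact pd_const_mul ((iter_smooth i m hf).diff x) c i

lemma iter_comm (i j : Fin n) (m : ℕ) {f : (Fin n → ℝ) → ℝ} (hf : Sm f) :
    (pd i)^[m] (pd j f) = pd j ((pd i)^[m] f) := by
  induction m with
  | zero => simp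
  | succ m ih =>
    rw [Function.iterate_succ_apply', Function.iterate_succ_apply', ih,
      ← pd_comm (iter_smooth i m hf) i j]

lemma iter_coord_mul_ne {i j : Fin n} (hij : j ≠ i) (m : ℕ) {f : (Fin n → ℝ) → ℝ}
    (hf : Sm f) :
    (pd i)^[m] (fun y => y j * f y) = fun y => y j * (pd i)^[m] f y := by
  induction m with
  | zero => simp
  | succ m ih =>
    rw [Function.iterate_succ_apply', Function.iterate_succ_apply', ih]
    funext x
    rw [pd_coord_mul ((iter_smooth i m hf).diff x) i j, if_neg hij, zero_add]

lemma iter_coord_mul_self (i : Fin n) (m : ℕ) {f : (Fin n → ℝ) → ℝ} (hf : Sm f) :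
    (pd i)^[m+1] (fun y => y i * f y)
      = fun y => y i * (pd i)^[m+1] f y + ((m:ℝ)+1) * (pd i)^[m] f y := by
  induction m with
  | zero =>
    funext x
    simp only [Function.iterate_one, Nat.cast_zero, zero_add, Function.iterate_zero_apply,
      one_mul]
    rw [pd_coord_mul (hf.diff x) i i, if_pos rfl]
    ring
  | succ m ih =>
    have hsm1 : Sm ((pd i)^[m+1] f) := iter_smooth i (m+1) hf
    have hsm0 : Sm ((pd i)^[m] f) := iter_smooth i m hf
    rw [Function.iterate_succ_apply' (pd i) (m+1), ih]
    funext x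
    have hA : DifferentiableAt ℝ (fun y => y i * (pd i)^[m+1] f y) x :=
      ((coord_mul_smooth i hsm1).diff x)
    have hB : DifferentiableAt ℝ (fun y => ((m:ℝ)+1) * (pd i)^[m] f y) x :=
      (Sm.diff (contDiff_const.mul hsm0) x)
    rw [pd_add hA hB i, pd_coord_mul (hsm1.diff x) i i, if_pos rfl,
      pd_const_mul (hsm0.diff x) _ i]
    have e1 : pd i ((pd i)^[m+1] f) = (pd i)^[m+2] f :=
      (Function.iterate_succ_apply' (pd i) (m+1) f).symm
    have e2 : pd i ((pd i)^[m] f) = (pd i)^[m+1] f :=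
      (Function.iterate_succ_apply' (pd i) m f).symm
    rw [e1, e2]
    push_cast
    ring

noncomputable def fold (l : List (Fin n)) (idx : Fin n → ℕ) (f : (Fin n → ℝ) → ℝ) :
    (Fin n → ℝ) → ℝ :=
  l.foldr (fun i g => (pd i)^[idx i] g) f

@[simp] lemma fold_nil (idx : Fin n → ℕ) (f : (Fin n → ℝ) → ℝ) :
    fold ([] : List (Fin n)) idx f = f := rfl

@[simp] lemma fold_cons (i : Fin n) (l : List (Fin n)) (idx : Fin n → ℕ)
    (f : (Fin n → ℝ) → ℝ) :
    fold (i :: l) idx f = (pd i)^[idx i] (fold l idx f) := rfl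

lemma fold_smooth (l : List (Fin n)) (idx : Fin n → ℕ) {f : (Fin n → ℝ) → ℝ}
    (hf : Sm f) : Sm (fold l idx f) := by
  induction l with
  | nil => simpa
  | cons i l ih => rw [fold_cons]; exact iter_smooth i (idx i) ih

lemma fold_congr {idx idx' : Fin n → ℕ} (l : List (Fin n))
    (h : ∀ i ∈ l, idx i = idx' i) (f : (Fin n → ℝ) → ℝ) :
    fold l idx f = fold l idx' f := by
  induction l with
  | nil => rfl
  | cons i l ih =>
    rw [fold_cons, fold_cons, ih (fun a ha => h a (List.mem_cons_of_mem i ha)),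
      h i List.mem_cons_self]

lemma fold_add (l : List (Fin n)) (idx : Fin n → ℕ) {f g : (Fin n → ℝ) → ℝ}
    (hf : Sm f) (hg : Sm g) :
    fold l idx (fun y => f y + g y) = fun y => fold l idx f y + fold l idx g y := by
  induction l with
  | nil => rfl
  | cons i l ih =>
    rw [fold_cons, ih, iter_add i (idx i) (fold_smooth l idx hf) (fold_smooth l idx hg)]
    rfl

lemma fold_const_mul (l : List (Fin n)) (idx : Fin n → ℕ) {f : (Fin n → ℝ) → ℝ}
    (hf : Sm f) (c : ℝ) :
    fold l idx (fun y => c * f y) = fun y => c * fold l idx f y := by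
  induction l with
  | nil => rfl
  | cons i l ih =>
    rw [fold_cons, ih, iter_const_mul i (idx i) (fold_smooth l idx hf) c]
    rfl

lemma fold_zero (l : List (Fin n)) (idx : Fin n → ℕ) :
    fold l idx (fun _ : Fin n → ℝ => (0:ℝ)) = fun _ => 0 := by
  have h : ∀ (i : Fin n) (m : ℕ), (pd i)^[m] (fun _ : Fin n → ℝ => (0:ℝ)) = fun _ => 0 := by
    intro i m
    induction m with
    | zero => rfl
    | succ m ih => rw [Function.iterate_succ_apply', ih, pd_zero]
  induction l with
  | nil => rfl
  | cons i l ih => rw [fold_cons, ih, h]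

lemma fold_sum (l : List (Fin n)) (idx : Fin n → ℕ) {F : Fin n → (Fin n → ℝ) → ℝ}
    (hF : ∀ j, Sm (F j)) (s : Finset (Fin n)) :
    fold l idx (fun y => ∑ j ∈ s, F j y) = fun y => ∑ j ∈ s, fold l idx (F j) y := by
  classical
  induction s using Finset.induction_on with
  | empty => simpa using fold_zero l idx
  | insert a s hns ih =>
    have h1 : (fun y => ∑ j ∈ insert a s, F j y)
        = fun y => F a y + ∑ j ∈ s, F j y := by
      funext y; rw [Finset.sum_insert hns]
    rw [h1, fold_add l idx (hF a) (ContDiff.sum fun j _ => hF j), ih]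
    funext y
    rw [Finset.sum_insert hns]

lemma fold_pd (l : List (Fin n)) (idx : Fin n → ℕ) (j : Fin n)
    {f : (Fin n → ℝ) → ℝ} (hf : Sm f) :
    fold l idx (pd j f) = pd j (fold l idx f) := by
  induction l with
  | nil => rfl
  | cons i l ih =>
    rw [fold_cons, ih, iter_comm i j (idx i) (fold_smooth l idx hf)]
    rfl

lemma fold_absorb (l : List (Fin n)) (idx : Fin n → ℕ) {j : Fin n}
    (hn : l.Nodup) (hj : j ∈ l) {f : (Fin n → ℝ) → ℝ} (hf : Sm f) :
    fold l idx (pd j f) = fold l (Function.update idx j (idx j + 1)) f := by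
  induction l with
  | nil => simp at hj
  | cons i l ih =>
    rcases List.nodup_cons.mp hn with ⟨hil, hln⟩
    rcases List.mem_cons.mp hj with hji | hjl
    · subst hji
      have hcong : fold l idx f = fold l (Function.update idx j (idx j + 1)) f :=
        fold_congr l (fun a ha =>
          (Function.update_of_ne (fun h : a = j => hil (by rwa [h] at ha)) _ idx).symm) f
      rw [fold_cons, fold_cons, fold_pd l idx j hf,
        ← Function.iterate_succ_apply (pd j) (idx j) (fold l idx f),
        hcong, Function.update_self]
    · have hji : j ≠ i := fun h => hil (h ▸ hjl)
      rw [fold_cons, fold_cons, ih hln hjl, Function.update_of_ne hji.symm]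

lemma fold_coord_mul (l : List (Fin n)) (hn : l.Nodup) (idx : Fin n → ℕ) (j : Fin n)
    {f : (Fin n → ℝ) → ℝ} (hf : Sm f) :
    fold l idx (fun y => y j * f y) = fun y =>
      y j * fold l idx f y +
        (if j ∈ l then (idx j : ℝ) else 0) *
          fold l (Function.update idx j (idx j - 1)) f y := by
  induction l with
  | nil => funext y; simp
  | cons i l ih =>
    rcases List.nodup_cons.mp hn with ⟨hil, hln⟩
    have hF : Sm (fold l idx f) := fold_smooth l idx hf
    have hG : Sm (fold l (Function.update idx j (idx j - 1)) f) :=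
      fold_smooth l _ hf
    rw [fold_cons, ih hln,
      iter_add i (idx i) (coord_mul_smooth j hF) (contDiff_const.mul hG),
      iter_const_mul i (idx i) hG]
    by_cases hji : j = i
    · subst hji
      rw [if_neg hil]
      cases hm : idx j with
      | zero =>
        funext y
        have hd : Function.update idx j (idx j - 1) = idx := by
          rw [hm]; simp [Function.update_eq_self_iff, hm]
        simp [hm, hd, List.mem_cons]
      | succ m =>
        rw [iter_coord_mul_self j m hF]
        funext y
        rw [if_pos List.mem_cons_self]
        have hde : fold l (Function.update idx j m) f = fold l idx f :=
          fold_congr l (fun a ha =>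
            Function.update_of_ne (fun h : a = j => hil (by rwa [h] at ha)) _ idx) f
        simp only [fold_cons, Function.update_self, hm, Nat.add_sub_cancel, hde]
        push_cast
        ring
    · have hji' : j ≠ i := hji
      rw [iter_coord_mul_ne hji' (idx i) hF]
      funext y
      have hdi : Function.update idx j (idx j - 1) i = idx i :=
        Function.update_of_ne (fun h : i = j => hji' h.symm) _ idx
      have hmem : (j ∈ i :: l) ↔ (j ∈ l) := by
        simp [List.mem_cons, hji']
      simp only [fold_cons, hdi, hmem]

noncomputable def mp (idx : Fin n → ℕ) (f : (Fin n → ℝ) → ℝ) : (Fin n → ℝ) → ℝ :=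
  fold (List.finRange n) idx f

lemma mp_def (idx : Fin n → ℕ) (f : (Fin n → ℝ) → ℝ) :
    mp idx f = fold (List.finRange n) idx f := rfl

lemma mp_smooth (idx : Fin n → ℕ) {f : (Fin n → ℝ) → ℝ} (hf : Sm f) : Sm (mp idx f) :=
  fold_smooth _ _ hf

lemma mp_absorb (idx : Fin n → ℕ) (j : Fin n) {f : (Fin n → ℝ) → ℝ} (hf : Sm f) :
    mp idx (pd j f) = mp (Function.update idx j (idx j + 1)) f :=
  fold_absorb _ idx (List.nodup_finRange n) (List.mem_finRange j) hf

lemma mp_coord_mul (idx : Fin n → ℕ) (j : Fin n) {f : (Fin n → ℝ) → ℝ} (hf : Sm f) :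
    mp idx (fun y => y j * f y) = fun y =>
      y j * mp idx f y + (idx j : ℝ) * mp (Function.update idx j (idx j - 1)) f y := by
  rw [mp_def, fold_coord_mul _ (List.nodup_finRange n) idx j hf,
    if_pos (List.mem_finRange j)]
  rfl

lemma iter_pderiv'_eq (i : Fin n) (m : ℕ) {f : (Fin n → ℝ) → ℝ} (hf : Sm f) :
    (pderiv' i)^[m] f = (pd i)^[m] f := by
  induction m with
  | zero => rfl
  | succ m ih =>
    rw [Function.iterate_succ_apply', Function.iterate_succ_apply', ih]
    funext x
    exact pderiv'_eq (iter_smooth i m hf).diff i x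

lemma fold_pderiv'_eq (l : List (Fin n)) (idx : Fin n → ℕ) {f : (Fin n → ℝ) → ℝ}
    (hf : Sm f) :
    l.foldr (fun i g => (pderiv' i)^[idx i] g) f = fold l idx f := by
  induction l with
  | nil => rfl
  | cons i l ih =>
    rw [List.foldr_cons, ih, iter_pderiv'_eq i (idx i) (fold_smooth l idx hf), fold_cons]

noncomputable def cc (idx : Fin n → ℕ) (x : Fin n → ℝ) : ℝ :=
  ∏ i, x i ^ idx i / (Nat.factorial (idx i) : ℝ)

lemma cc_inc (idx : Fin n → ℕ) (j : Fin n) (x : Fin n → ℝ) :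
    cc idx x * x j = ((idx j : ℝ) + 1) * cc (Function.update idx j (idx j + 1)) x := by
  classical
  have h1 : cc idx x = (x j ^ idx j / (Nat.factorial (idx j) : ℝ)) *
      ∏ i ∈ Finset.univ.erase j, x i ^ idx i / (Nat.factorial (idx i) : ℝ) :=
    (Finset.mul_prod_erase Finset.univ _ (Finset.mem_univ j)).symm
  have h2 : cc (Function.update idx j (idx j + 1)) x
      = (x j ^ (idx j + 1) / (Nat.factorial (idx j + 1) : ℝ)) *
        ∏ i ∈ Finset.univ.erase j, x i ^ idx i / (Nat.factorial (idx i) : ℝ) := by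
    rw [cc, ← Finset.mul_prod_erase Finset.univ _ (Finset.mem_univ j),
      Function.update_self]
    congr 1
    refine Finset.prod_congr rfl fun a ha => ?_
    rw [Function.update_of_ne (Finset.ne_of_mem_erase ha)]
  rw [h1, h2, Nat.factorial_succ]
  have hne : ((Nat.factorial (idx j) : ℝ)) ≠ 0 := Nat.cast_ne_zero.mpr (Nat.factorial_ne_zero _)
  push_cast
  field_simp
  ring

noncomputable def S (k : ℕ) (f : (Fin n → ℝ) → ℝ) (x : Fin n → ℝ) : ℝ :=
  ∑ idx ∈ Finset.Nat.antidiagonalTuple n k, cc idx x * mp idx f x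

lemma step_sum (k : ℕ) (f : (Fin n → ℝ) → ℝ) (x : Fin n → ℝ) :
    (∑ idx ∈ Finset.Nat.antidiagonalTuple n k, ∑ j : Fin n,
        cc idx x * (x j * mp (Function.update idx j (idx j + 1)) f x))
      = ((k:ℝ)+1) * S (k+1) f x := by
  classical
  set t := (Finset.Nat.antidiagonalTuple n (k+1) ×ˢ (Finset.univ : Finset (Fin n))).filter
      (fun q => q.1 q.2 ≠ 0) with ht
  have e1 : ((k:ℝ)+1) * S (k+1) f x
      = ∑ q ∈ Finset.Nat.antidiagonalTuple n (k+1) ×ˢ (Finset.univ : Finset (Fin n)),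
          ((q.1 q.2 : ℕ) : ℝ) * (cc q.1 x * mp q.1 f x) := by
    rw [Finset.sum_product, S, Finset.mul_sum]
    refine Finset.sum_congr rfl fun idx hidx => ?_
    have hsum : (∑ j, idx j) = k + 1 := Finset.Nat.mem_antidiagonalTuple.mp hidx
    have hc : (∑ y : Fin n, ((idx y : ℕ) : ℝ)) = (k:ℝ)+1 := by
      rw [← Nat.cast_sum, hsum]; push_cast; ring
    dsimp only
    rw [← Finset.sum_mul, hc]
  have e2 : ∑ q ∈ t, ((q.1 q.2 : ℕ) : ℝ) * (cc q.1 x * mp q.1 f x)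
      = ∑ q ∈ Finset.Nat.antidiagonalTuple n (k+1) ×ˢ (Finset.univ : Finset (Fin n)),
          ((q.1 q.2 : ℕ) : ℝ) * (cc q.1 x * mp q.1 f x) := by
    refine Finset.sum_filter_of_ne fun q hq h0 => ?_
    intro hq0
    exact h0 (by rw [hq0]; simp)
  rw [e1, ← e2, ← Finset.sum_product']
  refine Finset.sum_nbij'
    (fun p => (Function.update p.1 p.2 (p.1 p.2 + 1), p.2))
    (fun q => (Function.update q.1 q.2 (q.1 q.2 - 1), q.2)) ?_ ?_ ?_ ?_ ?_
  · intro p hp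
    rw [Finset.mem_product] at hp
    have hsum : (∑ i, p.1 i) = k := Finset.Nat.mem_antidiagonalTuple.mp hp.1
    have h1 : (∑ i, Function.update p.1 p.2 (p.1 p.2 + 1) i)
        = (p.1 p.2 + 1) + ∑ i ∈ Finset.univ \ {p.2}, p.1 i :=
      Finset.sum_update_of_mem (Finset.mem_univ p.2) p.1 (p.1 p.2 + 1)
    have h2 : p.1 p.2 + ∑ i ∈ Finset.univ.erase p.2, p.1 i = ∑ i, p.1 i :=
      Finset.add_sum_erase Finset.univ p.1 (Finset.mem_univ p.2)
    rw [Finset.erase_eq] at h2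
    rw [ht, Finset.mem_filter, Finset.mem_product]
    refine ⟨⟨Finset.Nat.mem_antidiagonalTuple.mpr
      (show (∑ i, Function.update p.1 p.2 (p.1 p.2 + 1) i) = k + 1 by omega),
      Finset.mem_univ _⟩, ?_⟩
    simp [Function.update_self]
  · intro q hq
    rw [ht, Finset.mem_filter, Finset.mem_product] at hq
    obtain ⟨⟨hq1, -⟩, hq0⟩ := hq
    have hsum : (∑ i, q.1 i) = k + 1 := Finset.Nat.mem_antidiagonalTuple.mp hq1
    have h1 : (∑ i, Function.update q.1 q.2 (q.1 q.2 - 1) i)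
        = (q.1 q.2 - 1) + ∑ i ∈ Finset.univ \ {q.2}, q.1 i :=
      Finset.sum_update_of_mem (Finset.mem_univ q.2) q.1 (q.1 q.2 - 1)
    have h2 : q.1 q.2 + ∑ i ∈ Finset.univ.erase q.2, q.1 i = ∑ i, q.1 i :=
      Finset.add_sum_erase Finset.univ q.1 (Finset.mem_univ q.2)
    rw [Finset.erase_eq] at h2
    rw [Finset.mem_product]
    exact ⟨Finset.Nat.mem_antidiagonalTuple.mpr
      (show (∑ i, Function.update q.1 q.2 (q.1 q.2 - 1) i) = k by omega),
      Finset.mem_univ _⟩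
  · intro p hp
    dsimp only
    have : Function.update (Function.update p.1 p.2 (p.1 p.2 + 1)) p.2
        (Function.update p.1 p.2 (p.1 p.2 + 1) p.2 - 1) = p.1 := by
      rw [Function.update_self, Nat.add_sub_cancel, Function.update_idem,
        Function.update_eq_self]
    rw [this]
  · intro q hq
    dsimp only
    rw [ht, Finset.mem_filter] at hq
    have h0 : q.1 q.2 ≠ 0 := hq.2
    have hs : q.1 q.2 - 1 + 1 = q.1 q.2 := Nat.sub_add_cancel (Nat.one_le_iff_ne_zero.mpr h0)
    have : Function.update (Function.update q.1 q.2 (q.1 q.2 - 1)) q.2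
        (Function.update q.1 q.2 (q.1 q.2 - 1) q.2 + 1) = q.1 := by
      rw [Function.update_self, Function.update_idem, hs, Function.update_eq_self]
    rw [this]
  · intro p hp
    dsimp only
    rw [Function.update_self]
    push_cast
    linear_combination (mp (Function.update p.1 p.2 (p.1 p.2 + 1)) f x) * cc_inc p.1 p.2 x

lemma fold_zero_idx (l : List (Fin n)) (f : (Fin n → ℝ) → ℝ) :
    fold l (0 : Fin n → ℕ) f = f := by
  induction l with
  | nil => rfl
  | cons i l ih => rw [fold_cons, ih]; simp

lemma mp_negsum (idx : Fin n → ℕ) {f : (Fin n → ℝ) → ℝ} (hf : Sm f) (x : Fin n → ℝ) :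
    mp idx (fun y => -∑ j, y j * pd j f y) x
      = -∑ j : Fin n, (x j * mp (Function.update idx j (idx j + 1)) f x
          + (idx j : ℝ) * mp idx f x) := by
  have hterm : ∀ j : Fin n, Sm (fun y => y j * pd j f y) :=
    fun j => coord_mul_smooth j (pd_smooth j hf)
  have h1 : (fun y : Fin n → ℝ => -∑ j, y j * pd j f y)
      = fun y => (-1 : ℝ) * ∑ j, y j * pd j f y := by funext y; ring
  rw [mp_def, h1, fold_const_mul _ idx (ContDiff.sum fun j (_ : j ∈ Finset.univ) => hterm j),
    fold_sum _ idx hterm Finset.univ]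
  have h2 : ∀ j : Fin n, fold (List.finRange n) idx (fun y => y j * pd j f y) x
      = x j * mp (Function.update idx j (idx j + 1)) f x + (idx j : ℝ) * mp idx f x := by
    intro j
    have h3 := congrFun (mp_coord_mul idx j (pd_smooth j hf)) x
    rw [mp_def] at h3
    rw [h3, mp_absorb idx j hf, mp_absorb (Function.update idx j (idx j - 1)) j hf]
    congr 1
    rcases Nat.eq_zero_or_pos (idx j) with h0 | hpos
    · simp [h0]
    · have hu : Function.update (Function.update idx j (idx j - 1)) j
          (Function.update idx j (idx j - 1) j + 1) = idx := by
        rw [Function.update_self, Function.update_idem, Nat.sub_add_cancel hpos,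
          Function.update_eq_self]
      rw [hu]
  dsimp only
  rw [Finset.sum_congr rfl fun j (_ : j ∈ Finset.univ) => h2 j]
  ring

lemma opPoch_eq (k : ℕ) : ∀ f : (Fin n → ℝ) → ℝ, Sm f → ∀ x : Fin n → ℝ,
    opPoch (negEuler n) k f x = (-1)^k * (Nat.factorial k : ℝ) * S k f x := by
  induction k with
  | zero =>
    intro f hf x
    have hA : Finset.Nat.antidiagonalTuple n 0 = {0} :=
      Finset.Nat.antidiagonalTuple_zero_right n
    have hmp : mp (0 : Fin n → ℕ) f = f := fold_zero_idx _ f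
    simp [opPoch, S, hA, hmp, cc]
  | succ k ih =>
    intro f hf x
    have hDsm : Sm (fun y : Fin n → ℝ => -∑ j, y j * pd j f y) :=
      (ContDiff.sum fun j (_ : j ∈ Finset.univ) =>
        coord_mul_smooth j (pd_smooth j hf)).neg
    have hg : negEuler n f + (k:ℝ) • f
        = fun y => (-∑ j, y j * pd j f y) + (k:ℝ) * f y := by
      funext y
      simp only [Pi.add_apply, Pi.smul_apply, smul_eq_mul, negEuler]
      congr 2
      exact Finset.sum_congr rfl fun j _ => by rw [pderiv'_eq hf.diff j y]
    have hG : Sm (fun y => (-∑ j, y j * pd j f y) + (k:ℝ) * f y) :=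
      hDsm.add (contDiff_const.mul hf)
    have hstep : opPoch (negEuler n) (k+1) f x
        = opPoch (negEuler n) k (negEuler n f + (k:ℝ) • f) x := rfl
    rw [hstep, hg, ih _ hG x]
    have hSG : S k (fun y => (-∑ j, y j * pd j f y) + (k:ℝ) * f y) x
        = -(((k:ℝ)+1) * S (k+1) f x) := by
      have hterm : ∀ idx ∈ Finset.Nat.antidiagonalTuple n k,
          cc idx x * mp idx (fun y => (-∑ j, y j * pd j f y) + (k:ℝ) * f y) x
          = -∑ j : Fin n, cc idx x *
              (x j * mp (Function.update idx j (idx j + 1)) f x) := by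
        intro idx hidx
        have hsum : (∑ j, idx j) = k := Finset.Nat.mem_antidiagonalTuple.mp hidx
        have hmpG : mp idx (fun y => (-∑ j, y j * pd j f y) + (k:ℝ) * f y) x
            = mp idx (fun y => -∑ j, y j * pd j f y) x + (k:ℝ) * mp idx f x := by
          rw [mp_def]
          simp only [fold_add _ idx hDsm (contDiff_const.mul hf),
            fold_const_mul _ idx hf ((k:ℝ))]
          rfl
        rw [hmpG, mp_negsum idx hf x, Finset.sum_add_distrib, ← Finset.sum_mul,
          ← Nat.cast_sum, hsum, ← Finset.mul_sum]
        ring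
      calc S k (fun y => (-∑ j, y j * pd j f y) + (k:ℝ) * f y) x
          = ∑ idx ∈ Finset.Nat.antidiagonalTuple n k,
              -∑ j : Fin n, cc idx x *
                (x j * mp (Function.update idx j (idx j + 1)) f x) :=
            Finset.sum_congr rfl hterm
        _ = -∑ idx ∈ Finset.Nat.antidiagonalTuple n k,
              ∑ j : Fin n, cc idx x *
                (x j * mp (Function.update idx j (idx j + 1)) f x) := by
            rw [Finset.sum_neg_distrib]
        _ = -(((k:ℝ)+1) * S (k+1) f x) := by rw [step_sum]
    rw [hSG, Nat.factorial_succ]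
    push_cast
    ring

end NEP

/-- Lemma 1, first identity: for smooth f,
(−δ₁−⋯−δ_n)_k f = (−1)^k k! ∑_{i₁+⋯+i_n=k} ∏ xⱼ^{iⱼ}/iⱼ! · ∂^{i₁+⋯+i_n} f. -/
theorem negEuler_pochhammer_eq (n k : ℕ) (hk : 0 < k)
    (f : (Fin n → ℝ) → ℝ) (hf : ContDiff ℝ (⊤ : ℕ∞) f) (x : Fin n → ℝ) :
    opPoch (negEuler n) k f x =
      (-1) ^ k * (Nat.factorial k : ℝ) *
        ∑' idx : Fin n → ℕ,
          if (∑ i, idx i) = k then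
            (∏ i, x i ^ idx i / (Nat.factorial (idx i) : ℝ)) *
              mixedPderiv idx f x
          else 0 := by
  have hf' : NEP.Sm f := hf.of_le (by simp)
  have hts : (∑' idx : Fin n → ℕ,
        if (∑ i, idx i) = k then
          (∏ i, x i ^ idx i / (Nat.factorial (idx i) : ℝ)) * mixedPderiv idx f x
        else 0)
      = NEP.S k f x := by
    rw [tsum_eq_sum (s := Finset.Nat.antidiagonalTuple n k)
      (fun idx hidx => if_neg (fun h => hidx (Finset.Nat.mem_antidiagonalTuple.mpr h)))]
    refine Finset.sum_congr rfl fun idx hidx => ?_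
    rw [if_pos (Finset.Nat.mem_antidiagonalTuple.mp hidx)]
    have hmpe : mixedPderiv idx f = NEP.mp idx f :=
      NEP.fold_pderiv'_eq (List.finRange n) idx hf'
    rw [hmpe]
    rfl
  rw [hts, NEP.opPoch_eq k f hf' x]
end

section
/- The confluent hypergeometric series H_A^{(n,p)}(a, b₁,...,b_n; c₁,...,c_n; ξ, η) = ∑_{m₁,...,m_{n+p} ≥ 0} (a)_{m₁+⋯+m_n − m_{n+1} − ⋯ − m_{n+p}} (b₁)_{m₁}⋯(b_n)_{m_n} / (m₁!⋯m_{n+p}! (c₁)_{m₁}⋯(c_n)_{m_n}) · ξ₁^{m₁}⋯ξ_n^{m_n} η₁^{m_{n+1}}⋯η_p^{m_{n+p}} converges absolutely for all η ∈ ℂ^p whenever |ξ₁| + ⋯ + |ξ_n| < 1, provided a is not an integer and no cⱼ is a non-positive integer. -/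
/-- Generalized Pochhammer symbol (a)_ν = Γ(a+ν)/Γ(a) for an integer ν. -/
noncomputable def pochZ (a : ℂ) (ν : ℤ) : ℂ :=
  Complex.Gamma (a + ν) / Complex.Gamma a

/-!
Write `M = m₁ + ⋯ + mₙ` and `N = mₙ₊₁ + ⋯ + mₙ₊ₚ`. Since `a` keeps a distance `δ > 0` from `ℤ`,
lowering the index of `(a)_M` by `N` costs at most a factor `δ⁻ᴺ`. For every `q > 1` the ratio
`(x)ₘ / (y)ₘ = ∏ₖ (x + k) / (y + k)` is `O(qᵐ)`, because its factors tend to `1`; applied to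
`(a)_M / (1)_M` and to `(bⱼ)ₘ / (cⱼ)ₘ`, this bounds the general term by a constant times
`M! ∏ (q² |ξᵢ|)^{mᵢ} / mᵢ! · ∏ (|ηⱼ| / δ)^{mₙ₊ⱼ} / mₙ₊ⱼ!`.
By the multinomial theorem, the slices `M = const` of the first factor sum to the geometric series
of `q² ∑ |ξᵢ| < 1`, and those of the second to the exponential series of `∑ |ηⱼ| / δ`.
-/

open Finset Filter
open scoped Nat Topology

theorem ascPochhammer_eval_eq_prod_range {R : Type*} [CommSemiring R] (n : ℕ) (r : R) :
    (ascPochhammer R n).eval r = ∏ k ∈ range n, (r + k) := by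
  induction n with
  | zero => simp
  | succ n ih => rw [ascPochhammer_succ_eval, ih, prod_range_succ]

theorem sum_piAntidiag_prod_pow_div_factorial {ι K : Type*} [Fintype ι] [DecidableEq ι]
    [Field K] [CharZero K] (x : ι → K) (M : ℕ) :
    ∑ m ∈ piAntidiag univ M, ∏ i, x i ^ m i / (m i)! = (∑ i, x i) ^ M / M ! := by
  rw [sum_pow_eq_sum_piAntidiag, sum_div]
  refine sum_congr rfl fun m hm => ?_
  rw [← (mem_piAntidiag.1 hm).1, ← Nat.multinomial_spec, prod_div_distrib]
  have := (Nat.multinomial_pos univ m).ne'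
  push_cast
  field_simp

theorem summable_mul_prod_pow_div_factorial {ι : Type*} [Fintype ι] {x : ι → ℝ}
    (hx : ∀ i, 0 ≤ x i) {f : ℕ → ℝ} (hf : ∀ M, 0 ≤ f M)
    (hs : Summable fun M => f M * ((∑ i, x i) ^ M / M !)) :
    Summable fun m : ι → ℕ => f (∑ i, m i) * ∏ i, x i ^ m i / (m i)! := by
  classical
  have hnonneg : 0 ≤ fun m : ι → ℕ => f (∑ i, m i) * ∏ i, x i ^ m i / (m i)! :=
    fun m => mul_nonneg (hf _) (prod_nonneg fun i _ => by have := hx i; positivity)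
  refine (summable_partition hnonneg
    (s := fun M => ((piAntidiag univ M : Finset (ι → ℕ)) : Set (ι → ℕ)))
    fun m => ⟨∑ i, m i, by simp, fun M hM => by simp_all⟩).2
    ⟨fun M => Summable.of_finite, hs.congr fun M => ?_⟩
  rw [Finset.tsum_subtype' _ fun m : ι → ℕ => f (∑ i, m i) * ∏ i, x i ^ m i / (m i)!,
    ← sum_piAntidiag_prod_pow_div_factorial, mul_sum]
  exact sum_congr rfl fun m hm => by rw [(mem_piAntidiag.1 hm).1]

theorem summable_factorial_sum_mul_prod_pow_div_factorial {ι : Type*} [Fintype ι] {x : ι → ℝ}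
    (hx : ∀ i, 0 ≤ x i) (hsum : ∑ i, x i < 1) :
    Summable fun m : ι → ℕ => ((∑ i, m i)! : ℝ) * ∏ i, x i ^ m i / (m i)! := by
  refine summable_mul_prod_pow_div_factorial (f := fun M => (M ! : ℝ)) hx
    (fun M => by positivity) ?_
  refine (summable_geometric_of_lt_one (sum_nonneg fun i _ => hx i) hsum).congr fun M => ?_
  field_simp

theorem summable_prod_pow_div_factorial {ι : Type*} [Fintype ι] {x : ι → ℝ}
    (hx : ∀ i, 0 ≤ x i) : Summable fun m : ι → ℕ => ∏ i, x i ^ m i / (m i)! := by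
  simpa using summable_mul_prod_pow_div_factorial (f := fun _ => (1 : ℝ)) hx
    (fun _ => zero_le_one) (by simpa using Real.summable_pow_div_factorial _)

theorem exists_prod_range_le_mul_pow {u : ℕ → ℝ} (hu : ∀ k, 0 ≤ u k) {q : ℝ} (hq : 0 < q)
    (h : ∀ᶠ k in atTop, u k ≤ q) : ∃ C, ∀ m, ∏ k ∈ range m, u k ≤ C * q ^ m := by
  obtain ⟨K, hK⟩ := eventually_atTop.1 h
  set v : ℕ → ℝ := fun k => max (u k / q) 1
  refine ⟨∏ k ∈ range K, v k, fun m => ?_⟩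
  have hv : ∀ k, K ≤ k → v k = 1 := fun k hk =>
    max_eq_right ((div_le_one hq).2 (hK k hk))
  calc ∏ k ∈ range m, u k = (∏ k ∈ range m, u k / q) * q ^ m := by
        rw [prod_div_distrib, prod_const, card_range, div_mul_cancel₀ _ (by positivity)]
    _ ≤ (∏ k ∈ range (max m K), v k) * q ^ m := by
        gcongr
        calc ∏ k ∈ range m, u k / q ≤ ∏ k ∈ range m, v k :=
              prod_le_prod (fun k _ => div_nonneg (hu k) hq.le) fun k _ => le_max_left _ _
          _ ≤ ∏ k ∈ range (max m K), v k :=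
              prod_le_prod_of_subset_of_one_le (range_subset_range.2 (le_max_left _ _))
                (fun k _ => zero_le_one.trans (le_max_right _ _)) fun k _ _ => le_max_right _ _
    _ = (∏ k ∈ range K, v k) * q ^ m := by
        rw [← prod_subset (range_subset_range.2 (le_max_right m K))
          fun k _ hk => hv k (by simpa using hk)]

theorem eventually_norm_add_natCast_le {𝕜 : Type*} [RCLike 𝕜] (x y : 𝕜) {q : ℝ}
    (hq : 1 < q) :
    ∀ᶠ k : ℕ in atTop, ‖x + k‖ ≤ q * ‖y + k‖ := by
  have hy : Tendsto (fun k : ℕ => ‖y + k‖) atTop atTop := by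
    refine tendsto_atTop_mono (fun k => ?_)
      (tendsto_atTop_add_const_right _ (-‖y‖) tendsto_natCast_atTop_atTop)
    have := norm_sub_norm_le (k : 𝕜) (-y)
    simp_all [add_comm]
  filter_upwards [hy.eventually_ge_atTop (‖x - y‖ / (q - 1))] with k hk
  have hxy : ‖y + k + (x - y)‖ ≤ ‖y + k‖ + ‖x - y‖ := norm_add_le _ _
  have : ‖x - y‖ ≤ (q - 1) * ‖y + k‖ := by
    rwa [div_le_iff₀' (by linarith)] at hk
  rw [show x + (k : 𝕜) = y + k + (x - y) by ring]
  linarith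

theorem exists_norm_ascPochhammer_eval_div_le {𝕜 : Type*} [RCLike 𝕜] (x : 𝕜) {y : 𝕜}
    (hy : ∀ k : ℕ, y ≠ -k) {q : ℝ} (hq : 1 < q) :
    ∃ C, ∀ m, ‖(ascPochhammer 𝕜 m).eval x / (ascPochhammer 𝕜 m).eval y‖ ≤ C * q ^ m := by
  have hyk : ∀ k : ℕ, 0 < ‖y + k‖ := fun k =>
    norm_pos_iff.2 fun h => hy k (eq_neg_of_add_eq_zero_left h)
  obtain ⟨C, hC⟩ := exists_prod_range_le_mul_pow (u := fun k => ‖x + k‖ / ‖y + k‖)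
    (fun k => by positivity) (by linarith)
    ((eventually_norm_add_natCast_le x y hq).mono fun k hk => (div_le_iff₀ (hyk k)).2 hk)
  refine ⟨C, fun m => ?_⟩
  simpa [ascPochhammer_eval_eq_prod_range, norm_prod, prod_div_distrib] using hC m

theorem exists_pos_le_norm_add_intCast {a : ℂ} (ha : ∀ z : ℤ, a ≠ z) :
    ∃ δ > 0, ∀ z : ℤ, δ ≤ ‖a + z‖ := by
  have hclosed : IsClosed (Set.range ((↑) : ℤ → ℂ)) := by
    simpa [Function.comp_def] using
      (Complex.isometry_ofReal.isClosedEmbedding.comp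
        Int.isClosedEmbedding_coe_real).isClosed_range
  obtain ⟨δ, hδ, hball⟩ := Metric.isOpen_iff.1 hclosed.isOpen_compl (-a) fun ⟨z, hz⟩ =>
    ha (-z) (by push_cast; linear_combination hz)
  refine ⟨δ, hδ, fun z => not_lt.1 fun h => hball ?_ ⟨z, rfl⟩⟩
  simpa [dist_eq_norm, add_comm] using h

theorem pochZ_add_one {a : ℂ} {z : ℤ} (h : a + z ≠ 0) :
    pochZ a (z + 1) = (a + z) * pochZ a z := by
  rw [pochZ, pochZ, Int.cast_add, Int.cast_one, ← add_assoc, Complex.Gamma_add_one _ h,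
    mul_div_assoc]

theorem pochZ_natCast {a : ℂ} (ha : ∀ k : ℕ, a ≠ -k) (M : ℕ) :
    pochZ a M = (ascPochhammer ℂ M).eval a := by
  rw [pochZ, Int.cast_natCast, Complex.Gamma_add_nat_div_Gamma_eq a ha]

theorem norm_pochZ_sub_natCast_mul_pow_le {a : ℂ} {δ : ℝ} (hδ : 0 < δ)
    (ha : ∀ z : ℤ, δ ≤ ‖a + z‖) (z : ℤ) (N : ℕ) :
    ‖pochZ a (z - N)‖ * δ ^ N ≤ ‖pochZ a z‖ := by
  induction N with
  | zero => simp
  | succ N ih =>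
    have hstep : pochZ a (z - N) = (a + (z - N - 1 : ℤ)) * pochZ a (z - N - 1) := by
      rw [← pochZ_add_one (norm_pos_iff.1 (hδ.trans_le (ha _))), sub_add_cancel]
    calc ‖pochZ a (z - (N + 1 : ℕ))‖ * δ ^ (N + 1)
        = ‖pochZ a (z - N - 1)‖ * δ * δ ^ N := by push_cast; rw [sub_add_eq_sub_sub]; ring
      _ ≤ ‖pochZ a (z - N - 1)‖ * ‖a + (z - N - 1 : ℤ)‖ * δ ^ N := by gcongr; exact ha _
      _ = ‖pochZ a (z - N)‖ * δ ^ N := by rw [hstep, norm_mul, mul_comm ‖a + _‖]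
      _ ≤ ‖pochZ a z‖ := ih

theorem exists_one_lt_sq_mul_lt {ρ : ℝ} (hρ : ρ < 1) :
    ∃ q : ℝ, 1 < q ∧ q ^ 2 * ρ < 1 := by
  have hcont : ContinuousAt (fun q : ℝ => q ^ 2 * ρ) 1 := by fun_prop
  have hlt : ∀ᶠ q in 𝓝[>] (1 : ℝ), q ^ 2 * ρ < 1 :=
    nhdsWithin_le_nhds (hcont.eventually (gt_mem_nhds (by simpa using hρ)))
  exact (hlt.and self_mem_nhdsWithin).exists.imp fun q h => ⟨h.2, h.1⟩

theorem exists_norm_pochZ_natCast_sub_le {a : ℂ} (ha : ∀ z : ℤ, a ≠ z) {q : ℝ}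
    (hq : 1 < q) :
    ∃ C : ℝ, ∃ r ≥ (0 : ℝ), ∀ M N : ℕ, ‖pochZ a (M - N)‖ ≤ C * M ! * q ^ M * r ^ N := by
  obtain ⟨δ, hδ, hδa⟩ := exists_pos_le_norm_add_intCast ha
  obtain ⟨C, hC⟩ := exists_norm_ascPochhammer_eval_div_le a (y := 1)
    (fun k h => Nat.cast_add_one_ne_zero (R := ℂ) k (by linear_combination h)) hq
  refine ⟨C, δ⁻¹, by positivity, fun M N => ?_⟩
  have hpoch := norm_pochZ_sub_natCast_mul_pow_le hδ hδa M N
  rw [pochZ_natCast (fun k => by exact_mod_cast ha (-k))] at hpoch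
  have hasc := hC M
  rw [ascPochhammer_eval_one, norm_div, Complex.norm_natCast,
    div_le_iff₀ (by positivity)] at hasc
  rw [inv_pow, ← div_eq_mul_inv, le_div_iff₀ (by positivity)]
  linarith

/-- The confluent hypergeometric series H_A^{(n,p)} converges absolutely
for all η ∈ ℂ^p whenever |ξ₁| + ⋯ + |ξ_n| < 1, provided a is not an
integer and no cⱼ is a non-positive integer. -/
theorem HA_summable (n p : ℕ) (a : ℂ) (b c : Fin n → ℂ)
    (ha : ∀ z : ℤ, a ≠ (z : ℂ))
    (hc : ∀ j : Fin n, ∀ k : ℕ, c j ≠ -(k : ℂ))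
    (ξ : Fin n → ℂ) (hξ : ∑ i, ‖ξ i‖ < 1)
    (η : Fin p → ℂ) :
    Summable (fun m : (Fin n → ℕ) × (Fin p → ℕ) =>
      pochZ a ((∑ i, (m.1 i : ℤ)) - ∑ j, (m.2 j : ℤ)) *
        (∏ i, (ascPochhammer ℂ (m.1 i)).eval (b i) /
          ((Nat.factorial (m.1 i) : ℂ) * (ascPochhammer ℂ (m.1 i)).eval (c i))) *
        (∏ j, (1 : ℂ) / (Nat.factorial (m.2 j) : ℂ)) *
        (∏ i, ξ i ^ m.1 i) * ∏ j, η j ^ m.2 j) := by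
  obtain ⟨q, hq, hqξ⟩ := exists_one_lt_sq_mul_lt hξ
  obtain ⟨Ca, r, hr, hCa⟩ := exists_norm_pochZ_natCast_sub_le ha hq
  choose C hC using fun i => exists_norm_ascPochhammer_eval_div_le (b i) (hc i) hq
  have hmaj := ((summable_factorial_sum_mul_prod_pow_div_factorial
    (x := fun i => q ^ 2 * ‖ξ i‖) (fun i => by positivity) (by rwa [← mul_sum])).mul_of_nonneg
    (summable_prod_pow_div_factorial (x := fun j => ‖η j‖ * r) fun j => by positivity)
    (fun _ => by positivity) fun _ => by positivity).mul_left (Ca * ∏ i, C i)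
  refine hmaj.of_norm_bounded fun ⟨m₁, m₂⟩ => ?_
  have hν : (∑ i, (m₁ i : ℤ)) - ∑ j, (m₂ j : ℤ) = ((∑ i, m₁ i : ℕ) : ℤ) - (∑ j, m₂ j : ℕ) := by
    push_cast; ring
  calc _ = ‖pochZ a ((∑ i, m₁ i : ℕ) - (∑ j, m₂ j : ℕ))‖ *
        (∏ i, ‖(ascPochhammer ℂ (m₁ i)).eval (b i) / (ascPochhammer ℂ (m₁ i)).eval (c i)‖ /
          (m₁ i)!) *
        (∏ j, 1 / ((m₂ j)! : ℝ)) * (∏ i, ‖ξ i‖ ^ m₁ i) * ∏ j, ‖η j‖ ^ m₂ j := by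
        simp only [hν, norm_mul, norm_prod, norm_div, norm_pow, norm_one, Complex.norm_natCast]
        congr 4
        exact prod_congr rfl fun i _ => by ring
    _ ≤ (Ca * (∑ i, m₁ i)! * q ^ (∑ i, m₁ i) * r ^ (∑ j, m₂ j)) *
        (∏ i, C i * q ^ m₁ i / (m₁ i)!) *
        (∏ j, 1 / ((m₂ j)! : ℝ)) * (∏ i, ‖ξ i‖ ^ m₁ i) * ∏ j, ‖η j‖ ^ m₂ j := by
        gcongr
        · exact (norm_nonneg _).trans (hCa _ _)
        · exact hCa _ _
        · exact hC _ _
    _ = _ := by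
        rw [← prod_pow_eq_pow_sum, ← prod_pow_eq_pow_sum]
        simp only [sq, mul_pow, div_eq_mul_inv, prod_mul_distrib, one_mul]
        ring
end

section
/- Gauss's summation theorem: if Re(c − a − b) > 0 and c is not a non-positive integer, then ∑_{m=0}^{∞} (a)_m (b)_m / ((c)_m m!) = Γ(c)Γ(c−a−b) / (Γ(c−a)Γ(c−b)). -/
/-!
Write `F(c)` for the series. Its terms satisfy `m (1 - t_{m+1}/t_m) → c + 1 - a - b`, so by
Raabe's test they are `O(m^{-s})` for some `s > 1`; in particular `m t_m → 0`. Summing a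
termwise identity then telescopes to the contiguous relation
`c (c - a - b) F(c) = (c - a) (c - b) F(c + 1)`, and iterating it gives
`F(c) = (c - a)_n (c - b)_n / ((c)_n (c - a - b)_n) · F(c + n)`.
As `n → ∞`, `F(c + n) → 1` by dominated convergence, while Euler's limit
`Γ(z) = lim n^{z-1} n! / (z)_n` turns the Pochhammer quotient into the Gamma quotient.
-/

/-- Pochhammer symbol (κ)_m for a complex number κ. -/
noncomputable def pochC (x : ℂ) (m : ℕ) : ℂ := (ascPochhammer ℂ m).eval x

open Filter Topology Finset Asymptotics

lemma pochC_succ_right (x : ℂ) (m : ℕ) : pochC x (m + 1) = pochC x m * (x + m) :=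
  ascPochhammer_succ_eval m x

lemma pochC_succ_left (x : ℂ) (m : ℕ) : pochC x (m + 1) = x * pochC (x + 1) m := by
  simp [pochC, ascPochhammer_succ_left]

lemma pochC_eq_prod (x : ℂ) (m : ℕ) : pochC x m = ∏ j ∈ range m, (x + j) := by
  induction m with
  | zero => simp [pochC]
  | succ m ih => rw [pochC_succ_right, ih, prod_range_succ]

lemma exists_pochC_eq_zero_of_Gamma_eq_zero {z : ℂ} (hz : Complex.Gamma z = 0) :
    ∃ n, pochC z n = 0 := by
  obtain ⟨k, hk⟩ := (Complex.Gamma_eq_zero_iff z).1 hz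
  exact ⟨k + 1, (ascPochhammer_eval_eq_zero_iff _ _).2 ⟨k, k.lt_succ_self, by simp [hk]⟩⟩

lemma add_one_rpow_mul_one_sub_div_le {x s : ℝ} (hx : 0 < x) (hs : 1 ≤ s) :
    (x + 1) ^ s * (1 - s / x) ≤ x ^ s := by
  have bernoulli : 1 - s / (x + 1) ≤ (x / (x + 1)) ^ s := by
    have := one_add_mul_self_le_rpow_one_add (s := -(x + 1)⁻¹)
      (by rw [neg_le_neg_iff]; exact inv_le_one_of_one_le₀ (by linarith)) hs
    convert this using 2 <;> field_simp <;> ring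
  calc (x + 1) ^ s * (1 - s / x) ≤ (x + 1) ^ s * (1 - s / (x + 1)) := by
        gcongr
        linarith
    _ ≤ (x + 1) ^ s * (x / (x + 1)) ^ s := by gcongr
    _ = x ^ s := by rw [Real.div_rpow hx.le (by linarith), mul_div_cancel₀ _ (by positivity)]

lemma isBigO_rpow_neg_of_norm_succ_le {E : Type*} [NormedAddCommGroup E] {t : ℕ → E} {s : ℝ}
    (hs : 1 ≤ s) (h : ∀ᶠ m : ℕ in atTop, ‖t (m + 1)‖ ≤ (1 - s / m) * ‖t m‖) :
    t =O[atTop] fun m : ℕ => (m : ℝ) ^ (-s) := by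
  obtain ⟨M, hM⟩ := (h.and (eventually_ge_atTop 1)).exists_forall_of_atTop
  have hle : ∀ m ≥ M, (m : ℝ) ^ s * ‖t m‖ ≤ (M : ℝ) ^ s * ‖t M‖ := by
    intro m hm
    induction m, hm using Nat.le_induction with
    | base => exact le_rfl
    | succ m hm ih =>
      have hm0 : (0 : ℝ) < m := by exact_mod_cast (hM m hm).2
      calc ((m + 1 : ℕ) : ℝ) ^ s * ‖t (m + 1)‖
          ≤ ((m : ℝ) + 1) ^ s * ((1 - s / m) * ‖t m‖) := by
            push_cast
            gcongr
            exact (hM m hm).1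
        _ = ((m : ℝ) + 1) ^ s * (1 - s / m) * ‖t m‖ := by ring
        _ ≤ (m : ℝ) ^ s * ‖t m‖ := by gcongr; exact add_one_rpow_mul_one_sub_div_le hm0 hs
        _ ≤ (M : ℝ) ^ s * ‖t M‖ := ih
  refine IsBigO.of_bound ((M : ℝ) ^ s * ‖t M‖) ?_
  filter_upwards [eventually_ge_atTop M, eventually_ge_atTop 1] with m hm hm1
  have hm0 : (0 : ℝ) < m := by exact_mod_cast hm1
  rw [Real.norm_of_nonneg (by positivity), Real.rpow_neg hm0.le, ← div_eq_mul_inv,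
    le_div_iff₀ (by positivity), mul_comm]
  exact hle m hm

/-- Raabe's test. -/
theorem exists_isBigO_rpow_neg_of_tendsto_mul_one_sub {E : Type*} [NormedAddCommGroup E]
    {t : ℕ → E} {ρ : ℕ → ℝ} {L : ℝ}
    (hρ : ∀ᶠ m : ℕ in atTop, ‖t (m + 1)‖ ≤ ρ m * ‖t m‖)
    (hL : Tendsto (fun m : ℕ => (m : ℝ) * (1 - ρ m)) atTop (𝓝 L)) (hL1 : 1 < L) :
    ∃ s : ℝ, 1 < s ∧ t =O[atTop] fun m : ℕ => (m : ℝ) ^ (-s) := by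
  refine ⟨(1 + L) / 2, by linarith, isBigO_rpow_neg_of_norm_succ_le (by linarith) ?_⟩
  filter_upwards [hρ, hL.eventually (lt_mem_nhds (show (1 + L) / 2 < L by linarith)),
    eventually_ge_atTop 1] with m hm hlt hm1
  have hm0 : (0 : ℝ) < m := by exact_mod_cast hm1
  have : (1 + L) / 2 / m ≤ 1 - ρ m := (div_le_iff₀' hm0).2 hlt.le
  exact hm.trans (mul_le_mul_of_nonneg_right (by linarith) (norm_nonneg _))

lemma tendsto_natCast_mul_one_sub_norm {r : ℕ → ℂ} {w : ℂ}
    (h : Tendsto (fun m : ℕ => (m : ℂ) * (1 - r m)) atTop (𝓝 w)) :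
    Tendsto (fun m : ℕ => (m : ℝ) * (1 - ‖r m‖)) atTop (𝓝 w.re) := by
  have hinv : Tendsto (fun m : ℕ => (m : ℂ)⁻¹) atTop (𝓝 0) :=
    tendsto_inv₀_cobounded.comp tendsto_natCast_atTop_cobounded
  have hr : Tendsto r atTop (𝓝 1) := by
    have h0 : Tendsto (fun m : ℕ => 1 - (m : ℂ)⁻¹ * ((m : ℂ) * (1 - r m))) atTop
        (𝓝 1) := by
      simpa using tendsto_const_nhds.sub (hinv.mul h)
    refine h0.congr' ?_
    filter_upwards [eventually_ne_atTop 0] with m hm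
    field_simp
    ring
  -- `(1 - ‖r‖) (1 + ‖r‖) = 1 - ‖r‖ ^ 2 = re ((1 - r) (1 + conj r))`
  have key : ∀ m : ℕ, (m : ℝ) * (1 - ‖r m‖)
      = ((m : ℂ) * (1 - r m) * (1 + (starRingEnd ℂ) (r m))).re / (1 + ‖r m‖) := by
    intro m
    rw [eq_div_iff (by positivity)]
    have hsq : ‖r m‖ ^ 2 = (r m).re ^ 2 + (r m).im ^ 2 := by
      rw [Complex.sq_norm, Complex.normSq_apply]; ring
    simp only [Complex.mul_re, Complex.mul_im, Complex.sub_re, Complex.add_re,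
      Complex.sub_im, Complex.add_im, Complex.conj_re, Complex.conj_im, Complex.natCast_re,
      Complex.natCast_im, Complex.one_re, Complex.one_im]
    linear_combination -(m : ℝ) * hsq
  simp_rw [key]
  have hlim : Tendsto (fun m : ℕ => ((m : ℂ) * (1 - r m) * (1 + (starRingEnd ℂ) (r m))).re /
      (1 + ‖r m‖)) atTop (𝓝 ((w * (1 + (starRingEnd ℂ) 1)).re / (1 + ‖(1 : ℂ)‖))) :=
    ((Complex.continuous_re.tendsto _).comp (h.mul (tendsto_const_nhds.add
      ((Complex.continuous_conj.tendsto 1).comp hr)))).div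
      (tendsto_const_nhds.add ((continuous_norm.tendsto 1).comp hr)) (by norm_num)
  convert hlim using 2
  simp only [map_one, norm_one, Complex.mul_re, Complex.add_re, Complex.one_re, Complex.add_im,
    Complex.one_im]
  ring

noncomputable def gaussTerm (a b c : ℂ) (m : ℕ) : ℂ :=
  pochC a m * pochC b m / (pochC c m * (Nat.factorial m : ℂ))

lemma gaussTerm_zero (a b c : ℂ) : gaussTerm a b c 0 = 1 := by
  simp [gaussTerm, pochC]

lemma gaussTerm_succ (a b c : ℂ) (m : ℕ) :
    gaussTerm a b c (m + 1) = (a + m) * (b + m) / ((c + m) * (m + 1)) * gaussTerm a b c m := by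
  simp only [gaussTerm, pochC_succ_right, Nat.factorial_succ]
  rw [div_mul_div_comm]
  push_cast
  congr 1 <;> ring

lemma gaussTerm_add_one (a b : ℂ) {c : ℂ} (hc : c ≠ 0) (m : ℕ) :
    gaussTerm a b (c + 1) m = c / (c + m) * gaussTerm a b c m := by
  have hden : (c + m) * (pochC c m * m.factorial) = c * (pochC (c + 1) m * m.factorial) := by
    rw [← mul_assoc, mul_comm (c + m), ← pochC_succ_right, pochC_succ_left, mul_assoc]
  rw [gaussTerm, gaussTerm, div_mul_div_comm, hden, mul_div_mul_left _ _ hc]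

lemma tendsto_natCast_mul_one_sub_gaussTerm_ratio (a b c : ℂ) :
    Tendsto (fun m : ℕ => (m : ℂ) * (1 - (a + m) * (b + m) / ((c + m) * (m + 1)))) atTop
      (𝓝 (c + 1 - a - b)) := by
  have hinv : Tendsto (fun m : ℕ => (m : ℂ)⁻¹) atTop (𝓝 0) :=
    tendsto_inv₀_cobounded.comp tendsto_natCast_atTop_cobounded
  have hc : Tendsto (fun m : ℕ => 1 + c * (m : ℂ)⁻¹) atTop (𝓝 1) := by
    simpa using tendsto_const_nhds.add (tendsto_const_nhds.mul hinv)
  have hlim : Tendsto (fun m : ℕ => ((c + 1 - a - b) + (c - a * b) * (m : ℂ)⁻¹) /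
      ((1 + c * (m : ℂ)⁻¹) * (1 + (m : ℂ)⁻¹))) atTop (𝓝 (c + 1 - a - b)) := by
    have := ((tendsto_const_nhds (x := c + 1 - a - b)).add
      ((tendsto_const_nhds (x := c - a * b)).mul hinv)).div
      (hc.mul (tendsto_const_nhds.add hinv)) (by norm_num : (1 : ℂ) * (1 + 0) ≠ 0)
    rwa [mul_zero, add_zero, add_zero, mul_one, div_one] at this
  refine hlim.congr' ?_
  filter_upwards [eventually_ne_atTop 0, hc.eventually_ne one_ne_zero] with m hm hcm
  have hcm₁ : c + m ≠ 0 := by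
    contrapose! hcm
    field_simp
    linear_combination hcm
  have hcm₂ : (m : ℂ) + c ≠ 0 := by rwa [add_comm]
  have hm1 : (m : ℂ) + 1 ≠ 0 := Nat.cast_add_one_ne_zero m
  field_simp
  ring

lemma exists_isBigO_gaussTerm {a b c : ℂ} (h : 0 < (c - a - b).re) :
    ∃ s : ℝ, 1 < s ∧ gaussTerm a b c =O[atTop] fun m : ℕ => (m : ℝ) ^ (-s) :=
  exists_isBigO_rpow_neg_of_tendsto_mul_one_sub
    (Eventually.of_forall fun m => (by rw [gaussTerm_succ, norm_mul]))
    (tendsto_natCast_mul_one_sub_norm (tendsto_natCast_mul_one_sub_gaussTerm_ratio a b c))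
    (by simpa [add_sub_right_comm] using h)

lemma summable_gaussTerm {a b c : ℂ} (h : 0 < (c - a - b).re) : Summable (gaussTerm a b c) := by
  obtain ⟨s, hs, hO⟩ := exists_isBigO_gaussTerm h
  exact summable_of_isBigO_nat (Real.summable_nat_rpow.2 (by linarith)) hO

lemma tendsto_natCast_mul_gaussTerm {a b c : ℂ} (h : 0 < (c - a - b).re) :
    Tendsto (fun m : ℕ => (m : ℂ) * gaussTerm a b c m) atTop (𝓝 0) := by
  obtain ⟨s, hs, hO⟩ := exists_isBigO_gaussTerm h
  have hcast : (fun m : ℕ => (m : ℂ)) =O[atTop] fun m : ℕ => (m : ℝ) :=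
    isBigO_of_le _ fun m => by simp
  refine (hcast.mul hO).trans_tendsto <|
    ((tendsto_rpow_neg_atTop (by linarith : 0 < s - 1)).comp
      tendsto_natCast_atTop_atTop).congr' ?_
  filter_upwards [eventually_ne_atTop 0] with m hm
  rw [Function.comp_apply, show -(s - 1) = 1 + -s by ring, Real.rpow_add (by positivity),
    Real.rpow_one]

lemma gaussTerm_contiguous (a b : ℂ) {c : ℂ} (hc : ∀ k : ℕ, c ≠ -k) (m : ℕ) :
    c * (c - a - b) * gaussTerm a b c m - (c - a) * (c - b) * gaussTerm a b (c + 1) m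
      = c * (m * gaussTerm a b c m - (m + 1 : ℕ) * gaussTerm a b c (m + 1)) := by
  have hc0 : c ≠ 0 := by simpa using hc 0
  have hcm : c + m ≠ 0 := fun h => hc m (eq_neg_of_add_eq_zero_left h)
  have hm1 : (m : ℂ) + 1 ≠ 0 := Nat.cast_add_one_ne_zero m
  rw [gaussTerm_add_one a b hc0, gaussTerm_succ]
  push_cast
  field_simp
  ring

lemma mul_tsum_gaussTerm_eq (a b : ℂ) {c : ℂ} (hc : ∀ k : ℕ, c ≠ -k)
    (h : 0 < (c - a - b).re) :
    c * (c - a - b) * ∑' m, gaussTerm a b c m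
      = (c - a) * (c - b) * ∑' m, gaussTerm a b (c + 1) m := by
  have h1 : 0 < (c + 1 - a - b).re := by
    rw [add_sub_right_comm, add_sub_right_comm, Complex.add_re, Complex.one_re]
    linarith
  set f : ℕ → ℂ := fun m => m * gaussTerm a b c m
  have hsum : HasSum (fun m => c * (f m - f (m + 1)))
      (c * (c - a - b) * ∑' m, gaussTerm a b c m
        - (c - a) * (c - b) * ∑' m, gaussTerm a b (c + 1) m) :=
    (((summable_gaussTerm h).hasSum.mul_left _).sub
      ((summable_gaussTerm h1).hasSum.mul_left _)).congr_fun
        fun m => (gaussTerm_contiguous a b hc m).symm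
  have htelescope : Tendsto (fun n => ∑ m ∈ range n, c * (f m - f (m + 1))) atTop (𝓝 0) := by
    simp_rw [← mul_sum, sum_range_sub']
    simpa [f] using ((tendsto_natCast_mul_gaussTerm h).const_sub 0).const_mul c
  exact sub_eq_zero.1 (tendsto_nhds_unique hsum.tendsto_sum_nat htelescope)

lemma tsum_gaussTerm_eq_mul_tsum_gaussTerm_add_natCast (a b : ℂ) {c : ℂ}
    (hc : ∀ k : ℕ, c ≠ -k) (h : 0 < (c - a - b).re) (n : ℕ) :
    ∑' m, gaussTerm a b c m
      = pochC (c - a) n * pochC (c - b) n / (pochC c n * pochC (c - a - b) n)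
        * ∑' m, gaussTerm a b (c + n) m := by
  induction n with
  | zero => simp [pochC]
  | succ n ih =>
    have hcn : ∀ k : ℕ, c + n ≠ -k := fun k hk =>
      hc (n + k) (by push_cast; linear_combination hk)
    have hn : 0 < (c + n - a - b).re := by
      rw [add_sub_right_comm, add_sub_right_comm, Complex.add_re, Complex.natCast_re]
      positivity
    have hden : (c + n) * (c + n - a - b) ≠ 0 :=
      mul_ne_zero (by simpa using hcn 0) fun h0 => by simp [h0] at hn
    have step : ∑' m, gaussTerm a b (c + n) m = (c + n - a) * (c + n - b) /
        ((c + n) * (c + n - a - b)) * ∑' m, gaussTerm a b (c + n + 1) m := by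
      rw [div_mul_eq_mul_div, eq_div_iff hden, mul_comm]
      exact mul_tsum_gaussTerm_eq a b hcn hn
    rw [ih, step, ← mul_assoc, div_mul_div_comm, Nat.cast_succ, ← add_assoc]
    simp only [pochC_succ_right]
    congr 2 <;> ring

lemma norm_gaussTerm_le (a b : ℂ) {z : ℂ} {R : ℝ} (hR : 0 < R) (hz : R ≤ z.re) (m : ℕ) :
    ‖gaussTerm a b z m‖ ≤ ‖gaussTerm ‖a‖ ‖b‖ R m‖ := by
  induction m with
  | zero => simp [gaussTerm_zero]
  | succ m ih =>
    rw [gaussTerm_succ, gaussTerm_succ, norm_mul, norm_mul]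
    refine mul_le_mul ?_ ih (norm_nonneg _) (norm_nonneg _)
    have hreal : ((‖a‖ : ℂ) + m) * ((‖b‖ : ℂ) + m) / (((R : ℂ) + m) * (m + 1))
        = (((‖a‖ + m) * (‖b‖ + m) / ((R + m) * (m + 1)) : ℝ) : ℂ) := by push_cast; ring
    have hm1 : ‖(m : ℂ) + 1‖ = m + 1 := by exact_mod_cast Complex.norm_natCast (m + 1)
    have hzm : R + m ≤ ‖z + m‖ := by
      have := Complex.re_le_norm (z + m)
      rw [Complex.add_re, Complex.natCast_re] at this
      linarith
    rw [hreal, Complex.norm_of_nonneg (by positivity), norm_div, norm_mul, norm_mul, hm1]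
    gcongr
    · exact (norm_add_le _ _).trans (by simp)
    · exact (norm_add_le _ _).trans (by simp)

lemma tendsto_gaussTerm_add_natCast (a b c : ℂ) (m : ℕ) :
    Tendsto (fun n : ℕ => gaussTerm a b (c + n) m) atTop (𝓝 (if m = 0 then 1 else 0)) := by
  cases m with
  | zero => simp [gaussTerm_zero]
  | succ m =>
    have hinv : Tendsto (fun n : ℕ => (pochC (c + n) (m + 1))⁻¹) atTop (𝓝 0) := by
      have hfactor (j : ℕ) : Tendsto (fun n : ℕ => (c + n + j)⁻¹) atTop (𝓝 0) :=
        tendsto_inv₀_cobounded.comp <|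
          ((tendsto_const_add_cobounded (c + j)).comp tendsto_natCast_atTop_cobounded).congr
            fun n => by simp only [Function.comp_apply]; ring
      have := tendsto_finsetProd (range (m + 1)) fun j _ => hfactor j
      rw [prod_const, card_range, zero_pow (Nat.succ_ne_zero m)] at this
      simpa only [pochC_eq_prod, prod_inv_distrib] using this
    have hterm (n : ℕ) : gaussTerm a b (c + n) (m + 1) = pochC a (m + 1) * pochC b (m + 1) /
        (m + 1).factorial * (pochC (c + n) (m + 1))⁻¹ := by
      rw [gaussTerm]; ring
    simpa [hterm] using hinv.const_mul (pochC a (m + 1) * pochC b (m + 1) / (m + 1).factorial)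

lemma tendsto_tsum_gaussTerm_add_natCast (a b c : ℂ) :
    Tendsto (fun n : ℕ => ∑' m, gaussTerm a b (c + n) m) atTop (𝓝 1) := by
  set R : ℝ := ‖a‖ + ‖b‖ + 1
  have hbound : Summable fun m => ‖gaussTerm ‖a‖ ‖b‖ R m‖ :=
    (summable_gaussTerm (by simp [R]; linarith)).norm
  have hdom : ∀ᶠ n : ℕ in atTop, ∀ m,
      ‖gaussTerm a b (c + n) m‖ ≤ ‖gaussTerm ‖a‖ ‖b‖ R m‖ := by
    filter_upwards [(tendsto_natCast_atTop_atTop (R := ℝ)).eventually_ge_atTop (R - c.re)]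
      with n hn m
    exact norm_gaussTerm_le a b (by positivity) (by simp; linarith) m
  simpa using tendsto_tsum_of_dominated_convergence hbound (tendsto_gaussTerm_add_natCast a b c)
    hdom

lemma tendsto_cpow_mul_factorial_div_pochC (z : ℂ) :
    Tendsto (fun n : ℕ => (n : ℂ) ^ (z - 1) * n.factorial / pochC z n) atTop
      (𝓝 (Complex.Gamma z)) := by
  have hshift : Tendsto (fun n : ℕ => (z + n) / n) atTop (𝓝 1) := by
    simpa [add_comm] using (tendsto_natCast_div_add_atTop z).inv₀ one_ne_zero
  have := (Complex.GammaSeq_tendsto_Gamma z).mul hshift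
  rw [mul_one] at this
  refine this.congr' ?_
  filter_upwards [eventually_ne_atTop 0, hshift.eventually_ne one_ne_zero] with n hn hzn
  have hn' : (n : ℂ) ≠ 0 := Nat.cast_ne_zero.2 hn
  have hzn' : z + n ≠ 0 := (div_ne_zero_iff.1 hzn).1
  rw [Complex.GammaSeq, prod_range_succ, ← pochC_eq_prod, Complex.cpow_sub _ _ hn',
    Complex.cpow_one]
  by_cases hp : pochC z n = 0
  · simp [hp]
  · field_simp

theorem tendsto_pochC_mul_div_pochC_mul {x y z w : ℂ} (h : x + y = z + w)
    (hzw : Complex.Gamma z * Complex.Gamma w ≠ 0) :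
    Tendsto (fun n : ℕ => pochC z n * pochC w n / (pochC x n * pochC y n)) atTop
      (𝓝 (Complex.Gamma x * Complex.Gamma y / (Complex.Gamma z * Complex.Gamma w))) := by
  refine (((tendsto_cpow_mul_factorial_div_pochC x).mul
    (tendsto_cpow_mul_factorial_div_pochC y)).div ((tendsto_cpow_mul_factorial_div_pochC z).mul
      (tendsto_cpow_mul_factorial_div_pochC w)) hzw).congr' ?_
  filter_upwards [eventually_ne_atTop 0] with n hn
  have hn' : (n : ℂ) ≠ 0 := Nat.cast_ne_zero.2 hn
  have hpow : (n : ℂ) ^ (x - 1) * (n : ℂ) ^ (y - 1)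
      = (n : ℂ) ^ (z - 1) * (n : ℂ) ^ (w - 1) := by
    rw [← Complex.cpow_add _ _ hn', ← Complex.cpow_add _ _ hn']
    congr 1
    linear_combination h
  have hK : (n : ℂ) ^ (z - 1) * (n : ℂ) ^ (w - 1) * (n.factorial * n.factorial) ≠ 0 := by
    have := n.factorial_ne_zero
    simp [Complex.cpow_eq_zero_iff, hn', this]
  simp only [Pi.div_apply, div_mul_div_comm]
  rw [mul_mul_mul_comm, hpow, mul_mul_mul_comm _ (n.factorial : ℂ),
    div_div_div_cancel_left' _ _ hK]

/-- Gauss's summation theorem: if Re(c−a−b) > 0 and c is not a non-positive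
integer, then ∑_{m≥0} (a)_m(b)_m/((c)_m m!) = Γ(c)Γ(c−a−b)/(Γ(c−a)Γ(c−b)). -/
theorem gauss_summation (a b c : ℂ)
    (hc : ∀ k : ℕ, c ≠ -(k : ℂ))
    (h : 0 < (c - a - b).re) :
    ∑' m : ℕ, pochC a m * pochC b m / (pochC c m * (Nat.factorial m : ℂ))
      = Complex.Gamma c * Complex.Gamma (c - a - b) /
        (Complex.Gamma (c - a) * Complex.Gamma (c - b)) := by
  have key := tsum_gaussTerm_eq_mul_tsum_gaussTerm_add_natCast a b hc h
  change ∑' m, gaussTerm a b c m = _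
  by_cases hΓ : Complex.Gamma (c - a) * Complex.Gamma (c - b) = 0
  · -- `Gamma` is `0` at its poles, and then the Pochhammer quotient vanishes from some `n` on
    obtain ⟨n, hn⟩ : ∃ n, pochC (c - a) n * pochC (c - b) n = 0 := by
      rcases mul_eq_zero.1 hΓ with hΓa | hΓb
      · obtain ⟨n, hn⟩ := exists_pochC_eq_zero_of_Gamma_eq_zero hΓa
        exact ⟨n, by rw [hn, zero_mul]⟩
      · obtain ⟨n, hn⟩ := exists_pochC_eq_zero_of_Gamma_eq_zero hΓb
        exact ⟨n, by rw [hn, mul_zero]⟩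
    rw [key n, hn, zero_div, zero_mul, hΓ, div_zero]
  · have hlim := (tendsto_pochC_mul_div_pochC_mul (x := c) (y := c - a - b) (by ring)
      hΓ).mul (tendsto_tsum_gaussTerm_add_natCast a b c)
    rw [mul_one] at hlim
    exact tendsto_nhds_unique (tendsto_const_nhds.congr key) hlim
end
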